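/- The value of a maximum fractional packing of odd \(T\)-walks in \((G, T, cap)\) equals the value of a maximum fractional multiflow in the symmetrized network \((\widetilde{G}, \widetilde{T}, \widetilde{cap})\) with commodity graph \(H_T\). -/

import Mathlib

/-- The bipartite double cover `G̃` of `G`. -/
def doubleCover {V : Type*} (G : SimpleGraph V) : SimpleGraph (V ⊕ V) where
  Adj a b := ∃ u v, G.Adj u v ∧
    ((a = Sum.inl u ∧ b = Sum.inr v) ∨ (a = Sum.inr u ∧ b = Sum.inl v))
  symm := by
    constructor
    rintro a b ⟨u, v, h, (⟨rfl, rfl⟩ | ⟨rfl, rfl⟩)⟩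
    · exact ⟨v, u, h.symm, Or.inr ⟨rfl, rfl⟩⟩
    · exact ⟨v, u, h.symm, Or.inl ⟨rfl, rfl⟩⟩
  loopless := by
    constructor
    rintro a ⟨u, v, h, (⟨rfl, h2⟩ | ⟨rfl, h2⟩)⟩ <;> simp at h2

/-- Capacities on the double cover: each of the two copies of edge `uv` gets `½ cap(uv)`. -/
noncomputable def capTilde {V : Type*} (cap : Sym2 V → ℝ) (e : Sym2 (V ⊕ V)) : ℝ :=
  cap (Sym2.map (Sum.elim id id) e) / 2

/-- `r` is the value of some fractional packing of odd `T`-walks in `(G, T, cap)`. -/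
def IsOddTWalkPackingValue {V : Type*} [DecidableEq V] (G : SimpleGraph V)
    (T : Set V) (cap : Sym2 V → ℝ) (r : ℝ) : Prop :=
  ∃ (m : ℕ) (α : Fin m → ℝ) (x y : Fin m → V) (W : ∀ i, G.Walk (x i) (y i)),
    (∀ i, 0 ≤ α i) ∧
    (∀ i, x i ∈ T ∧ y i ∈ T ∧ x i ≠ y i) ∧
    (∀ i, Odd (W i).length) ∧
    (∀ e ∈ G.edgeSet, ∑ i, α i * ((W i).edges.count e : ℝ) ≤ cap e) ∧
    r = ∑ i, α i

/-- `r` is the value of some fractional multiflow in `(G̃, T̃, c̃ap)` with commodity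
graph `H_T` (walks joining `t₁` to `t₂'` for distinct terminals `t₁, t₂`). -/
def IsMultiflowValue {V : Type*} [DecidableEq V] (G : SimpleGraph V)
    (T : Set V) (cap : Sym2 V → ℝ) (r : ℝ) : Prop :=
  ∃ (m : ℕ) (α : Fin m → ℝ) (x y : Fin m → V)
    (W : ∀ i, (doubleCover G).Walk (Sum.inl (x i)) (Sum.inr (y i))),
    (∀ i, 0 ≤ α i) ∧
    (∀ i, x i ∈ T ∧ y i ∈ T ∧ x i ≠ y i) ∧
    (∀ e ∈ (doubleCover G).edgeSet,
      ∑ i, α i * ((W i).edges.count e : ℝ) ≤ capTilde cap e) ∧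
    r = ∑ i, α i

/-!
Projecting a walk of `G̃` from `t₁` to `t₂'` onto `G` gives a walk of odd length, since every
edge of `G̃` changes sides, and the load on an edge `uv` is the sum of the loads on its two copies
`uv'` and `u'v`. Conversely every odd walk of `G` from `t₁` lifts to a walk of `G̃` from `t₁` to
`t₂'`. Splitting the weight of each odd walk equally between its lift and the mirror image of
that lift puts half the original load on each copy of an edge, which fits exactly under
`c̃ap = cap / 2`. So both problems have the same feasible values, not only the same supremum.
-/

open SimpleGraph

namespace doubleCover

variable {V : Type*} (G : SimpleGraph V)

def proj : doubleCover G →g G where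
  toFun := Sum.elim id id
  map_rel' := by
    rintro a b ⟨u, v, h, (⟨rfl, rfl⟩ | ⟨rfl, rfl⟩)⟩ <;> simpa using h

def swap : doubleCover G →g doubleCover G where
  toFun := Sum.swap
  map_rel' := by
    rintro a b ⟨u, v, h, (⟨rfl, rfl⟩ | ⟨rfl, rfl⟩)⟩
    · exact ⟨u, v, h, Or.inr ⟨rfl, rfl⟩⟩
    · exact ⟨u, v, h, Or.inl ⟨rfl, rfl⟩⟩

@[simp] lemma proj_inl (u : V) : proj G (Sum.inl u) = u := rfl

@[simp] lemma proj_inr (u : V) : proj G (Sum.inr u) = u := rfl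

variable {G}

lemma exists_eq_of_mem_edgeSet {e : Sym2 (V ⊕ V)} (he : e ∈ (doubleCover G).edgeSet) :
    ∃ u v, G.Adj u v ∧ e = s(Sum.inl u, Sum.inr v) := by
  induction e using Sym2.ind with
  | _ a b =>
    obtain ⟨u, v, huv, (⟨rfl, rfl⟩ | ⟨rfl, rfl⟩)⟩ := he
    · exact ⟨u, v, huv, rfl⟩
    · exact ⟨v, u, huv.symm, Sym2.eq_swap⟩

lemma even_length_iff {s t : V ⊕ V} (W : (doubleCover G).Walk s t) :
    Even W.length ↔ s.isLeft = t.isLeft := by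
  induction W with
  | nil => simp
  | @cons a b c h p ih =>
    rw [Walk.length_cons, Nat.even_add_one, ih]
    obtain ⟨u, v, _, (⟨rfl, rfl⟩ | ⟨rfl, rfl⟩)⟩ := h <;> cases c.isLeft <;> simp

lemma odd_length_map_proj {u v : V} (W : (doubleCover G).Walk (Sum.inl u) (Sum.inr v)) :
    Odd (W.map (proj G)).length := by
  rw [Walk.length_map, ← Nat.not_even_iff_odd, even_length_iff]
  simp

lemma exists_adj_lift {s : V ⊕ V} {v : V} (h : G.Adj (proj G s) v) :
    ∃ t, proj G t = v ∧ (doubleCover G).Adj s t := by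
  rcases s with u | u
  · exact ⟨Sum.inr v, rfl, u, v, h, Or.inl ⟨rfl, rfl⟩⟩
  · exact ⟨Sum.inl v, rfl, u, v, h, Or.inr ⟨rfl, rfl⟩⟩

lemma exists_walk_lift {u v : V} (w : G.Walk u v) (s : V ⊕ V) (hs : proj G s = u) :
    ∃ (t : V ⊕ V) (W : (doubleCover G).Walk s t),
      proj G t = v ∧ (W.map (proj G)).edges = w.edges := by
  induction w generalizing s with
  | nil => exact ⟨s, Walk.nil, hs, rfl⟩
  | @cons a b c h p ih =>
    subst hs
    obtain ⟨s', hs', hadj⟩ := exists_adj_lift h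
    obtain ⟨t, W, ht, hW⟩ := ih s' hs'
    subst hs'
    exact ⟨t, Walk.cons hadj W, ht, by simpa [Walk.edges_map] using hW⟩

lemma exists_walk_lift_of_odd {u v : V} (w : G.Walk u v) (hw : Odd w.length) :
    ∃ W : (doubleCover G).Walk (Sum.inl u) (Sum.inr v), (W.map (proj G)).edges = w.edges := by
  obtain ⟨t, W, ht, hW⟩ := exists_walk_lift w (Sum.inl u) rfl
  have hlen : W.length = w.length := by
    rw [← Walk.length_edges, ← Walk.length_edges w, ← hW, Walk.edges_map, List.length_map]
  have hright : ¬ (Sum.inl u : V ⊕ V).isLeft = t.isLeft :=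
    (even_length_iff W).not.mp (hlen ▸ Nat.not_even_iff_odd.mpr hw)
  rcases t with t | t
  · exact absurd rfl hright
  · obtain rfl : t = v := ht
    exact ⟨W, hW⟩

def mirror {u v : V} (W : (doubleCover G).Walk (Sum.inl u) (Sum.inr v)) :
    (doubleCover G).Walk (Sum.inl v) (Sum.inr u) :=
  W.reverse.map (swap G)

def withMirrors {ι : Type*} {x y : ι → V}
    (W : ∀ i, (doubleCover G).Walk (Sum.inl (x i)) (Sum.inr (y i))) :
    ∀ k : ι ⊕ ι, (doubleCover G).Walk (Sum.inl (Sum.elim x y k)) (Sum.inr (Sum.elim y x k))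
  | .inl i => W i
  | .inr i => mirror (W i)

variable [DecidableEq V]

-- For `a = b` the two copies `s(inl a, inr a)` and `s(inr a, inl a)` of the loop coincide.
lemma count_edges_map_proj {s t : V ⊕ V} (W : (doubleCover G).Walk s t) {a b : V}
    (hab : a ≠ b) :
    (W.map (proj G)).edges.count s(a, b) =
      W.edges.count s(Sum.inl a, Sum.inr b) + W.edges.count s(Sum.inr a, Sum.inl b) := by
  induction W with
  | nil => rfl
  | @cons c d t h p ih =>
    simp only [Walk.map_cons, Walk.edges_cons, List.count_cons, ih, beq_iff_eq]
    obtain ⟨u, v, -, (⟨rfl, rfl⟩ | ⟨rfl, rfl⟩)⟩ := h <;>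
      · simp only [proj_inl, proj_inr, Sym2.eq_iff, Sum.inl.injEq, Sum.inr.injEq, reduceCtorEq,
          and_false, or_false, false_or]
        grind

lemma count_edges_mirror {u v : V} (W : (doubleCover G).Walk (Sum.inl u) (Sum.inr v))
    (e : Sym2 (V ⊕ V)) : (mirror W).edges.count e = W.edges.count (e.map Sum.swap) := by
  have hinj : Function.Injective (Sym2.map (@Sum.swap V V)) :=
    Sym2.map.injective Sum.swap_leftInverse.injective
  have he : e = (e.map Sum.swap).map Sum.swap := by simp [Sym2.map_map]
  conv_lhs => rw [he]
  rw [show (mirror W).edges = _ from Walk.edges_map (swap G) W.reverse, Walk.edges_reverse]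
  exact (List.count_map_of_injective _ _ hinj _).trans List.count_reverse

lemma sum_mul_count_withMirrors {ι : Type*} [Fintype ι] {x y : ι → V}
    (W : ∀ i, (doubleCover G).Walk (Sum.inl (x i)) (Sum.inr (y i))) (c : ι → ℝ)
    (e : Sym2 (V ⊕ V)) :
    ∑ k, Sum.elim c c k * ((withMirrors W k).edges.count e : ℝ) =
      ∑ i, c i * ((W i).edges.count e + (W i).edges.count (e.map Sum.swap) : ℝ) := by
  rw [Fintype.sum_sum_type, ← Finset.sum_add_distrib]
  refine Finset.sum_congr rfl fun i _ => ?_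
  change c i * _ + c i * ((mirror (W i)).edges.count e : ℝ) = _
  rw [count_edges_mirror, mul_add]
  rfl

end doubleCover

lemma capTilde_inl_inr {V : Type*} (cap : Sym2 V → ℝ) (u v : V) :
    capTilde cap s(Sum.inl u, Sum.inr v) = cap s(u, v) / 2 := rfl

lemma capTilde_inr_inl {V : Type*} (cap : Sym2 V → ℝ) (u v : V) :
    capTilde cap s(Sum.inr u, Sum.inl v) = cap s(u, v) / 2 := rfl

section Packings

open doubleCover

variable {V : Type*} [DecidableEq V] {G : SimpleGraph V} {T : Set V} {cap : Sym2 V → ℝ} {r : ℝ}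

lemma isMultiflowValue_of_fintype {ι : Type*} [Fintype ι] (α : ι → ℝ) (x y : ι → V)
    (W : ∀ i, (doubleCover G).Walk (Sum.inl (x i)) (Sum.inr (y i))) (hα : ∀ i, 0 ≤ α i)
    (hT : ∀ i, x i ∈ T ∧ y i ∈ T ∧ x i ≠ y i)
    (hW : ∀ e ∈ (doubleCover G).edgeSet,
      ∑ i, α i * ((W i).edges.count e : ℝ) ≤ capTilde cap e) :
    IsMultiflowValue G T cap (∑ i, α i) := by
  let σ := (Fintype.equivFin ι).symm
  refine ⟨_, α ∘ σ, x ∘ σ, y ∘ σ, fun k => W (σ k), fun k => hα _, fun k => hT _,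
    fun e he => ?_, (σ.sum_comp α).symm⟩
  exact (σ.sum_comp fun i => α i * ((W i).edges.count e : ℝ)).trans_le (hW e he)

theorem IsMultiflowValue.isOddTWalkPackingValue (h : IsMultiflowValue G T cap r) :
    IsOddTWalkPackingValue G T cap r := by
  obtain ⟨m, α, x, y, W, hα, hT, hW, rfl⟩ := h
  refine ⟨m, α, x, y, fun i => (W i).map (proj G), hα, hT, fun i => ?_, fun e he => ?_, rfl⟩
  · exact odd_length_map_proj (W i)
  induction e using Sym2.ind with
  | _ u v =>
    have huv : G.Adj u v := he
    calc ∑ i, α i * (((W i).map (proj G)).edges.count s(u, v) : ℝ)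
        = ∑ i, α i * ((W i).edges.count s(Sum.inl u, Sum.inr v) : ℝ)
          + ∑ i, α i * ((W i).edges.count s(Sum.inr u, Sum.inl v) : ℝ) := by
          simp only [count_edges_map_proj _ huv.ne, Nat.cast_add, mul_add, Finset.sum_add_distrib]
      _ ≤ capTilde cap s(Sum.inl u, Sum.inr v) + capTilde cap s(Sum.inr u, Sum.inl v) :=
          add_le_add (hW _ ⟨u, v, huv, .inl ⟨rfl, rfl⟩⟩) (hW _ ⟨u, v, huv, .inr ⟨rfl, rfl⟩⟩)
      _ = cap s(u, v) := by rw [capTilde_inl_inr, capTilde_inr_inl]; ring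

theorem IsOddTWalkPackingValue.isMultiflowValue (h : IsOddTWalkPackingValue G T cap r) :
    IsMultiflowValue G T cap r := by
  obtain ⟨m, α, x, y, w, hα, hT, hodd, hw, rfl⟩ := h
  choose W hW using fun i => exists_walk_lift_of_odd (w i) (hodd i)
  have hsum : ∑ i, α i = ∑ k : Fin m ⊕ Fin m, Sum.elim (α · / 2) (α · / 2) k := by
    simp only [Fintype.sum_sum_type, Sum.elim_inl, Sum.elim_inr, ← Finset.sum_add_distrib,
      add_halves]
  rw [hsum]
  refine isMultiflowValue_of_fintype _ (Sum.elim x y) (Sum.elim y x) (withMirrors W) ?_ ?_ ?_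
  · rintro (i | i) <;> exact div_nonneg (hα i) zero_le_two
  · rintro (i | i)
    · exact hT i
    · exact ⟨(hT i).2.1, (hT i).1, (hT i).2.2.symm⟩
  intro e he
  obtain ⟨u, v, huv, rfl⟩ := exists_eq_of_mem_edgeSet he
  calc ∑ k, Sum.elim (α · / 2) (α · / 2) k *
          ((withMirrors W k).edges.count s(Sum.inl u, Sum.inr v) : ℝ)
      = ∑ i, α i * ((w i).edges.count s(u, v) : ℝ) / 2 := by
        rw [sum_mul_count_withMirrors]
        refine Finset.sum_congr rfl fun i _ => ?_
        rw [← hW i, count_edges_map_proj (W i) huv.ne, Sym2.map_mk, Sum.swap_inl,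
          Sum.swap_inr]
        push_cast
        ring
    _ ≤ capTilde cap s(Sum.inl u, Sum.inr v) := by
        rw [capTilde_inl_inr, ← Finset.sum_div]
        exact div_le_div_of_nonneg_right (hw _ huv) zero_le_two

end Packings

theorem stmt9_general {V : Type*} [DecidableEq V] (G : SimpleGraph V)
    (T : Set V) (cap : Sym2 V → ℝ) :
    sSup {r | IsOddTWalkPackingValue G T cap r} =
      sSup {r | IsMultiflowValue G T cap r} :=
  congrArg sSup <| Set.ext fun _ =>
    ⟨IsOddTWalkPackingValue.isMultiflowValue, IsMultiflowValue.isOddTWalkPackingValue⟩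

/-- The maximum value of a fractional packing of odd `T`-walks in `(G, T, cap)` equals
the maximum value of a fractional multiflow in `(G̃, T̃, c̃ap)` with commodity graph `H_T`. -/
theorem stmt9 {V : Type*} [Fintype V] [DecidableEq V] (G : SimpleGraph V)
    (T : Set V) (cap : Sym2 V → ℝ) (hcap : ∀ e, 0 ≤ cap e) :
    sSup {r | IsOddTWalkPackingValue G T cap r} =
      sSup {r | IsMultiflowValue G T cap r} :=
  stmt9_general G T cap
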